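/- Trichotomy of the constrained D-optimal solution: if w solves max log|M(w)| over Ω_ε with M(w) positive definite, then there exists a constant c such that for every i: wᵢ = 0 whenever xᵢᵀ M(w)⁻¹ xᵢ < c, wᵢ = ε whenever xᵢᵀ M(w)⁻¹ xᵢ > c, and 0 ≤ wᵢ ≤ ε when xᵢᵀ M(w)⁻¹ xᵢ = c. -/

import Mathlib

/-!
Moving mass `t` from a support point `i` to a point `j` with `w j < ε` stays in `Ω_ε` for small
`t > 0` and, by the matrix determinant lemma applied to the rank-two update, multiplies
`det M(w)` by `1 + t (d_j - d_i) + O(t²)`, where `d_m = x_mᵀ M(w)⁻¹ x_m`. The perturbed matrix is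
positive semidefinite with a larger determinant, hence positive definite,
so optimality forces `d_j ≤ d_i`, and `c = max {d_j | w j < ε}` is a threshold.
-/

open Matrix Filter Topology

theorem Matrix.det_add_smul_vecMulVec_sub_vecMulVec {n R : Type*} [Fintype n] [DecidableEq n]
    [CommRing R] {A : Matrix n n R} (hA : IsUnit A.det) (u v : n → R) (t : R) :
    (A + t • (vecMulVec v v - vecMulVec u u)).det =
      A.det * ((1 + t * (v ⬝ᵥ A⁻¹ *ᵥ v)) * (1 - t * (u ⬝ᵥ A⁻¹ *ᵥ u)) +
        t ^ 2 * ((v ⬝ᵥ A⁻¹ *ᵥ u) * (u ⬝ᵥ A⁻¹ *ᵥ v))) := by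
  let U : Matrix (Fin 2) n R := ![t • v, -t • u]
  let V : Matrix (Fin 2) n R := ![v, u]
  have hUV : t • (vecMulVec v v - vecMulVec u u) = Uᵀ * V := by
    ext a b
    rw [Matrix.mul_apply, Fin.sum_univ_two, transpose_apply, transpose_apply]
    simp only [U, V, smul_apply, sub_apply, vecMulVec_apply, smul_eq_mul, cons_val_zero,
      cons_val_one, Pi.smul_apply]
    ring
  have hentry (p q : Fin 2) : (V * A⁻¹ * Uᵀ) p q = V p ⬝ᵥ A⁻¹ *ᵥ U q := by
    rw [Matrix.mul_assoc]
    simp only [mul_apply, dotProduct, mulVec, transpose_apply]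
  rw [hUV, det_add_mul Uᵀ V hA, det_fin_two]
  simp only [Matrix.add_apply, hentry, one_apply_eq, one_apply_ne zero_ne_one,
    one_apply_ne one_ne_zero, U, V, cons_val_zero, cons_val_one, mulVec_smul, dotProduct_smul,
    smul_eq_mul]
  ring

theorem exists_pos_le_one_lt_quadratic {p q b : ℝ} (hqp : q < p) (hb : 0 < b) (r : ℝ) :
    ∃ t, 0 < t ∧ t ≤ b ∧ 1 < (1 + t * p) * (1 - t * q) + t ^ 2 * r := by
  have hslope : ∀ᶠ t in 𝓝 (0 : ℝ), 0 < (p - q) - t * (p * q - r) := by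
    have hcont : ContinuousAt (fun t : ℝ => (p - q) - t * (p * q - r)) 0 := by fun_prop
    exact hcont.eventually (lt_mem_nhds (by simpa using hqp))
  obtain ⟨t, ht0, htb, hslope⟩ := ((eventually_mem_nhdsWithin (a := (0 : ℝ)) (s := Set.Ioi 0)).and
    (nhdsWithin_le_nhds ((eventually_le_nhds hb).and hslope))).exists
  refine ⟨t, ht0, htb, ?_⟩
  nlinarith [mul_pos (Set.mem_Ioi.1 ht0) hslope]

theorem exists_threshold {ι : Type*} [Finite ι] {L w : ι → ℝ} {ε : ℝ}
    (hw : ∀ i, 0 ≤ w i ∧ w i ≤ ε) (hL : ∀ i j, 0 < w i → w j < ε → L j ≤ L i) :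
    ∃ c, ∀ i, (L i < c → w i = 0) ∧ (c < L i → w i = ε) ∧ (L i = c → 0 ≤ w i ∧ w i ≤ ε) := by
  suffices ∃ c, ∀ i, (L i < c → w i = 0) ∧ (c < L i → w i = ε) from
    this.imp fun c hc i => ⟨(hc i).1, (hc i).2, fun _ => hw i⟩
  by_cases hfull : ∀ j, w j = ε
  · obtain ⟨c, hc⟩ := (Set.finite_range L).bddBelow
    exact ⟨c, fun i => ⟨fun h => absurd (hc ⟨i, rfl⟩) (not_le.2 h), fun _ => hfull i⟩⟩
  · push Not at hfull
    obtain ⟨j₀, hj₀⟩ := hfull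
    have hne : {j | w j < ε}.Nonempty := ⟨j₀, lt_of_le_of_ne (hw j₀).2 hj₀⟩
    obtain ⟨j, hj, hmax⟩ := Set.exists_max_image _ L (Set.toFinite _) hne
    refine ⟨L j, fun i => ⟨fun hi => ?_, fun hi => ?_⟩⟩
    · by_contra hw0
      exact (hL i j (lt_of_le_of_ne (hw i).1 (Ne.symm hw0)) hj).not_gt hi
    · by_contra hwε
      exact (hmax i (lt_of_le_of_ne (hw i).2 hwε)).not_gt hi

section Design

variable {ι n : Type*} [Fintype ι]

def infoMatrix [Fintype n] (x : ι → n → ℝ) (w : ι → ℝ) : Matrix n n ℝ :=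
  ∑ i, w i • vecMulVec (x i) (x i)

def cappedSimplex (ε : ℝ) : Set (ι → ℝ) :=
  {w | (∀ i, 0 ≤ w i ∧ w i ≤ ε) ∧ ∑ i, w i = 1}

theorem posSemidef_infoMatrix [Fintype n] (x : ι → n → ℝ) {w : ι → ℝ} (hw : ∀ i, 0 ≤ w i) :
    (infoMatrix x w).PosSemidef :=
  posSemidef_sum _ fun i _ => (posSemidef_vecMulVec_self_star (x i)).smul (hw i)

variable [DecidableEq ι]

theorem infoMatrix_transfer [Fintype n] (x : ι → n → ℝ) (w : ι → ℝ) (t : ℝ) (i j : ι) :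
    infoMatrix x (w + t • (Pi.single j 1 - Pi.single i 1)) =
      infoMatrix x w + t • (vecMulVec (x j) (x j) - vecMulVec (x i) (x i)) := by
  simp [infoMatrix, add_smul, sub_smul, mul_smul, Finset.sum_add_distrib, Finset.sum_sub_distrib,
    Pi.single_apply, ← Finset.smul_sum]

theorem transfer_mem_cappedSimplex {ε t : ℝ} {w : ι → ℝ} (hw : w ∈ cappedSimplex ε) {i j : ι}
    (hij : i ≠ j) (ht : 0 ≤ t) (hti : t ≤ w i) (htj : t ≤ ε - w j) :
    w + t • (Pi.single j 1 - Pi.single i 1) ∈ cappedSimplex ε := by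
  refine ⟨fun m => ?_, ?_⟩
  · obtain ⟨h0, hε⟩ := hw.1 m
    simp only [Pi.add_apply, Pi.smul_apply, Pi.sub_apply, Pi.single_apply, smul_eq_mul]
    split_ifs <;> subst_vars <;> first | exact (hij rfl).elim | constructor <;> linarith
  · simp [Finset.sum_add_distrib, Finset.sum_sub_distrib, ← Finset.mul_sum, hw.2]

theorem leverage_le_of_logDet_optimal [Fintype n] [DecidableEq n] {x : ι → n → ℝ} {ε : ℝ}
    {w : ι → ℝ} (hw : w ∈ cappedSimplex ε) (hpd : (infoMatrix x w).PosDef)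
    (hopt : ∀ w' ∈ cappedSimplex ε, (infoMatrix x w').PosDef →
      Real.log (infoMatrix x w').det ≤ Real.log (infoMatrix x w).det)
    {i j : ι} (hi : 0 < w i) (hj : w j < ε) :
    x j ⬝ᵥ (infoMatrix x w)⁻¹ *ᵥ x j ≤ x i ⬝ᵥ (infoMatrix x w)⁻¹ *ᵥ x i := by
  by_contra! hlt
  have hij : i ≠ j := by rintro rfl; exact hlt.false
  set A := infoMatrix x w
  obtain ⟨t, ht0, htb, hgrowth⟩ := exists_pos_le_one_lt_quadratic hlt (lt_min hi (sub_pos.2 hj))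
    ((x j ⬝ᵥ A⁻¹ *ᵥ x i) * (x i ⬝ᵥ A⁻¹ *ᵥ x j))
  set w' := w + t • (Pi.single j 1 - Pi.single i 1)
  have hw' : w' ∈ cappedSimplex ε :=
    transfer_mem_cappedSimplex hw hij ht0.le (htb.trans (min_le_left _ _))
      (htb.trans (min_le_right _ _))
  have hdet : A.det < (infoMatrix x w').det := by
    rw [infoMatrix_transfer, det_add_smul_vecMulVec_sub_vecMulVec hpd.det_pos.ne'.isUnit]
    exact lt_mul_of_one_lt_right hpd.det_pos hgrowth
  have hpd' : (infoMatrix x w').PosDef :=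
    (posSemidef_infoMatrix x fun m => (hw'.1 m).1).posDef_iff_det_ne_zero.2
      (hpd.det_pos.trans hdet).ne'
  exact (Real.log_lt_log hpd.det_pos hdet).not_ge (hopt w' hw' hpd')

end Design

theorem trichotomy_constrained_D_optimal_general (N k : ℕ) (x : Fin N → Fin k → ℝ)
    (ε : ℝ)
    (M : (Fin N → ℝ) → Matrix (Fin k) (Fin k) ℝ)
    (hM : ∀ v, M v = ∑ i, v i • Matrix.vecMulVec (x i) (x i))
    (Ω : Set (Fin N → ℝ))
    (hΩ : Ω = {w | (∀ i, 0 ≤ w i ∧ w i ≤ ε) ∧ ∑ i, w i = 1})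
    (w : Fin N → ℝ) (hw : w ∈ Ω) (hpd : (M w).PosDef)
    (hopt : ∀ w' ∈ Ω, (M w').PosDef →
      Real.log (M w').det ≤ Real.log (M w).det) :
    ∃ c : ℝ, ∀ i,
      (x i ⬝ᵥ ((M w)⁻¹ *ᵥ x i) < c → w i = 0) ∧
      (c < x i ⬝ᵥ ((M w)⁻¹ *ᵥ x i) → w i = ε) ∧
      (x i ⬝ᵥ ((M w)⁻¹ *ᵥ x i) = c → 0 ≤ w i ∧ w i ≤ ε) := by
  obtain rfl : M = infoMatrix x := funext hM
  obtain rfl : Ω = cappedSimplex ε := hΩ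
  exact exists_threshold hw.1 fun i j hi hj => leverage_le_of_logDet_optimal hw hpd hopt hi hj

/-- Trichotomy of the constrained D-optimal solution: if `w` solves
`max log|M(w)|` over `Ω_ε` with `M(w)` positive definite, then there is a
constant `c` such that `wᵢ = 0` whenever the leverage `xᵢᵀ M(w)⁻¹ xᵢ < c`,
`wᵢ = ε` whenever it is `> c`, and `0 ≤ wᵢ ≤ ε` when it equals `c`. -/
theorem trichotomy_constrained_D_optimal (N k : ℕ) (x : Fin N → Fin k → ℝ)
    (ε : ℝ) (hε : 0 < ε) (hε1 : ε < 1) (hNε : 1 ≤ N * ε)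
    (M : (Fin N → ℝ) → Matrix (Fin k) (Fin k) ℝ)
    (hM : ∀ v, M v = ∑ i, v i • Matrix.vecMulVec (x i) (x i))
    (Ω : Set (Fin N → ℝ))
    (hΩ : Ω = {w | (∀ i, 0 ≤ w i ∧ w i ≤ ε) ∧ ∑ i, w i = 1})
    (w : Fin N → ℝ) (hw : w ∈ Ω) (hpd : (M w).PosDef)
    (hopt : ∀ w' ∈ Ω, (M w').PosDef →
      Real.log (M w').det ≤ Real.log (M w).det) :
    ∃ c : ℝ, ∀ i,
      (x i ⬝ᵥ ((M w)⁻¹ *ᵥ x i) < c → w i = 0) ∧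
      (c < x i ⬝ᵥ ((M w)⁻¹ *ᵥ x i) → w i = ε) ∧
      (x i ⬝ᵥ ((M w)⁻¹ *ᵥ x i) = c → 0 ≤ w i ∧ w i ≤ ε) :=
  trichotomy_constrained_D_optimal_general N k x ε M hM Ω hΩ w hw hpd hopt
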